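/- arXiv:2308.10119 — 2 statements merged into one kernel-verified Lean document; each statement's English description precedes it below -/
import Mathlib

section
/- Fix integers m ≥ 2 and n ≥ 1, vectors x_1,…,x_m ∈ ℝ^n, weights w ∈ ℝ^m, and P > 0 such that Σ_{i=1}^m Σ_{t=1}^{n} (w_i x_{i,t})² ≤ m n P. For S ⊆ {1,…,m} set v_S = Σ_{i∈S} w_i x_i ∈ ℝ^n. Then the average squared Euclidean distance over all unordered pairs of distinct subsets satisfies (1 / (2 · C(2^m, 2))) · Σ_{S₁ ⊆ {1,…,m}} Σ_{S₂ ⊆ {1,…,m}} ‖v_{S₁} − v_{S₂}‖₂² ≤ 2^m m n P / (2^m − 1). -/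
open Finset

/-!
Writing `d = v_{S₁} - v_{S₂}` coordinatewise, the sum of `d²` over all pairs of subsets is
`4^m / 2` times the total energy `E = ∑ᵢ ∑ₜ (wᵢ xᵢₜ)²`: adjoining a new index `a` to the ground set
replaces each pair by four pairs whose differences are `d, d - f a, d + f a, d`, and
`d² + (d - f a)² + (d + f a)² + d² = 4 d² + 2 (f a)²`. Dividing by `2^m (2^m - 1)` ordered pairs
of distinct subsets leaves `2^(m-1) E / (2^m - 1)`, which the power constraint bounds.
-/

theorem two_mul_sum_powerset_sum_powerset_sq_sub {ι R : Type*} [DecidableEq ι] [CommRing R]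
    (f : ι → R) (s : Finset ι) :
    2 * ∑ S ∈ s.powerset, ∑ T ∈ s.powerset, (∑ i ∈ S, f i - ∑ i ∈ T, f i) ^ 2
      = 4 ^ #s * ∑ i ∈ s, f i ^ 2 := by
  induction s using Finset.induction_on with
  | empty => simp
  | insert a s ha ih =>
    have sum_insert_of_mem_powerset :
        ∀ S ∈ s.powerset, ∑ i ∈ insert a S, f i = f a + ∑ i ∈ S, f i :=
      fun S hS => sum_insert (notMem_mono (mem_powerset.1 hS) ha)
    have split : ∑ S ∈ (insert a s).powerset, ∑ T ∈ (insert a s).powerset,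
          (∑ i ∈ S, f i - ∑ i ∈ T, f i) ^ 2
        = ∑ S ∈ s.powerset, ∑ T ∈ s.powerset,
          (4 * (∑ i ∈ S, f i - ∑ i ∈ T, f i) ^ 2 + 2 * f a ^ 2) := by
      rw [sum_powerset_insert ha, ← sum_add_distrib]
      refine sum_congr rfl fun S hS => ?_
      rw [sum_powerset_insert ha, sum_powerset_insert ha, ← sum_add_distrib, ← sum_add_distrib,
        ← sum_add_distrib]
      refine sum_congr rfl fun T hT => ?_
      rw [sum_insert_of_mem_powerset S hS, sum_insert_of_mem_powerset T hT]
      ring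
    have four_pow : (4 : R) ^ #s = 2 ^ #s * 2 ^ #s := by rw [← mul_pow]; norm_num
    simp only [split, sum_add_distrib, sum_const, ← mul_sum, card_powerset, nsmul_eq_mul]
    rw [card_insert_of_notMem ha, sum_insert ha]
    push_cast
    linear_combination 4 * ih - 4 * f a ^ 2 * four_pow

theorem sum_finset_sum_finset_sq_sub {ι K : Type*} [Fintype ι] [DecidableEq ι] [Field K]
    [NeZero (2 : K)] (f : ι → K) :
    ∑ S : Finset ι, ∑ T : Finset ι, (∑ i ∈ S, f i - ∑ i ∈ T, f i) ^ 2
      = 4 ^ Fintype.card ι / 2 * ∑ i, f i ^ 2 := by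
  have h := two_mul_sum_powerset_sum_powerset_sq_sub f univ
  rw [powerset_univ, card_univ] at h
  rw [div_mul_eq_mul_div, eq_div_iff two_ne_zero, ← h, mul_comm]

theorem average_squared_distance_bound_general
    (m : ℕ) (n : ℕ)
    (x : Fin m → Fin n → ℝ) (w : Fin m → ℝ)
    (P : ℝ)
    (hpow : ∑ i : Fin m, ∑ t, (w i * x i t) ^ 2 ≤ m * n * P) :
    (1 / (2 * ((2 ^ m).choose 2 : ℝ)))
        * ∑ S₁ : Finset (Fin m), ∑ S₂ : Finset (Fin m),
            ∑ t, ((∑ i ∈ S₁, w i * x i t) - ∑ i ∈ S₂, w i * x i t) ^ 2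
      ≤ 2 ^ m * m * n * P / (2 ^ m - 1) := by
  set E := ∑ i : Fin m, ∑ t, (w i * x i t) ^ 2
  have total : ∑ S₁ : Finset (Fin m), ∑ S₂ : Finset (Fin m),
      ∑ t, ((∑ i ∈ S₁, w i * x i t) - ∑ i ∈ S₂, w i * x i t) ^ 2 = 4 ^ m / 2 * E := by
    rw [sum_congr rfl fun S₁ _ => sum_comm, sum_comm,
      sum_congr rfl fun t _ => sum_finset_sum_finset_sq_sub _, ← mul_sum, sum_comm,
      Fintype.card_fin]
  have pairs : 2 * ((2 ^ m).choose 2 : ℝ) = 2 ^ m * (2 ^ m - 1) := by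
    rw [Nat.cast_choose_two]; push_cast; ring
  have cancel : 4 ^ m / 2 * E / 2 ^ m = 2 ^ m / 2 * E := by
    rw [show (4 : ℝ) ^ m = 2 ^ m * 2 ^ m by rw [← mul_pow]; norm_num]
    field_simp
  have E_nonneg : 0 ≤ E := by positivity
  rw [total, pairs, one_div_mul_eq_div, div_mul_eq_div_div, cancel]
  refine div_le_div_of_nonneg_right ?_ (sub_nonneg.2 (one_le_pow₀ one_le_two))
  calc 2 ^ m / 2 * E ≤ 2 ^ m * E := by gcongr; exact half_le_self (by positivity)
    _ ≤ 2 ^ m * m * n * P := by rw [mul_assoc, mul_assoc, ← mul_assoc (m : ℝ)]; gcongr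

/-- **Average squared distance bound (21).**  Under the total power constraint
`∑_i ∑_t (w_i x_{i,t})² ≤ m n P`, the average squared Euclidean distance between sent
signals `v_S = ∑_{i∈S} w_i x_i` over all unordered pairs of distinct subsets of
`{1,…,m}` is at most `2^m m n P / (2^m - 1)`. -/
theorem average_squared_distance_bound
    (m : ℕ) (hm : 2 ≤ m) (n : ℕ) (hn : 1 ≤ n)
    (x : Fin m → Fin n → ℝ) (w : Fin m → ℝ)
    (P : ℝ) (hP : 0 < P)
    (hpow : ∑ i : Fin m, ∑ t, (w i * x i t) ^ 2 ≤ m * n * P) :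
    (1 / (2 * ((2 ^ m).choose 2 : ℝ)))
        * ∑ S₁ : Finset (Fin m), ∑ S₂ : Finset (Fin m),
            ∑ t, ((∑ i ∈ S₁, w i * x i t) - ∑ i ∈ S₂, w i * x i t) ^ 2
      ≤ 2 ^ m * m * n * P / (2 ^ m - 1) :=
  average_squared_distance_bound_general m n x w P hpow
end

section
/- Fix integers m ≥ 2 and n ≥ 1, vectors x_1,…,x_m ∈ ℝ^n, weights w ∈ ℝ^m, and P > 0 such that Σ_{i=1}^m Σ_{t=1}^{n} (w_i x_{i,t})² ≤ m n P. For S ⊆ {1,…,m} set v_S = Σ_{i∈S} w_i x_i ∈ ℝ^n. Then there exist two distinct subsets S ≠ S' of {1,…,m} such that ‖v_S − v_{S'}‖₂² ≤ 2^m m n P / (2^m − 1). -/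
/-!
Summed over all ordered pairs, `∑_{S,S'} ‖v_S - v_{S'}‖² = 4^m / 2 · ∑_i ‖w_i x_i‖²`
(by induction on the index set), which the power constraint bounds by `4^m m n P / 2`.
Diagonal pairs contribute nothing, so one of the `2^m (2^m - 1)` pairs `S ≠ S'` is at most
the average.
-/

open Finset

lemma two_mul_sum_powerset_sub_sq {ι : Type*} [DecidableEq ι] (u : Finset ι) (a : ι → ℝ) :
    2 * ∑ S ∈ u.powerset, ∑ S' ∈ u.powerset, (∑ i ∈ S, a i - ∑ i ∈ S', a i) ^ 2
      = 4 ^ #u * ∑ i ∈ u, a i ^ 2 := by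
  induction u using Finset.induction_on with
  | empty => simp
  | @insert j u hj ih =>
    have sum_insert_of_subset : ∀ S ∈ u.powerset, ∑ i ∈ insert j S, a i = a j + ∑ i ∈ S, a i :=
      fun S hS => sum_insert fun h => hj (mem_powerset.mp hS h)
    -- Adding `j` to neither, one or both of `S`, `S'` turns the difference `d` into
    -- `d`, `d ± a j` or `d`, and these four squares sum to `4 d² + 2 (a j)²`.
    have step : ∀ S ∈ u.powerset,
        ∑ S' ∈ (insert j u).powerset, (∑ i ∈ S, a i - ∑ i ∈ S', a i) ^ 2
            + ∑ S' ∈ (insert j u).powerset, (∑ i ∈ insert j S, a i - ∑ i ∈ S', a i) ^ 2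
          = ∑ S' ∈ u.powerset, (4 * (∑ i ∈ S, a i - ∑ i ∈ S', a i) ^ 2 + 2 * a j ^ 2) := by
      intro S hS
      rw [← sum_add_distrib, sum_powerset_insert hj, ← sum_add_distrib]
      refine sum_congr rfl fun S' hS' => ?_
      rw [sum_insert_of_subset S hS, sum_insert_of_subset S' hS']
      ring
    rw [sum_powerset_insert hj, ← sum_add_distrib, sum_congr rfl step]
    simp only [sum_add_distrib, ← mul_sum, sum_const, card_powerset, nsmul_eq_mul]
    rw [card_insert_of_notMem hj, sum_insert hj, pow_succ]
    have four_pow : (4 : ℝ) ^ #u = 2 ^ #u * 2 ^ #u := by rw [← mul_pow]; norm_num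
    push_cast
    linear_combination 4 * ih - 4 * a j ^ 2 * four_pow

lemma two_mul_sum_sum_sum_sub_sq {ι κ : Type*} [Fintype ι] [DecidableEq ι] [Fintype κ]
    (a : ι → κ → ℝ) :
    2 * ∑ S : Finset ι, ∑ S' : Finset ι, ∑ t, (∑ i ∈ S, a i t - ∑ i ∈ S', a i t) ^ 2
      = 4 ^ Fintype.card ι * ∑ i, ∑ t, a i t ^ 2 := by
  calc 2 * ∑ S : Finset ι, ∑ S' : Finset ι, ∑ t, (∑ i ∈ S, a i t - ∑ i ∈ S', a i t) ^ 2
      = ∑ t, 2 * ∑ S : Finset ι, ∑ S' : Finset ι, (∑ i ∈ S, a i t - ∑ i ∈ S', a i t) ^ 2 := by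
        simp only [mul_sum]
        exact (sum_congr rfl fun S _ => sum_comm).trans sum_comm
    _ = ∑ t, 4 ^ Fintype.card ι * ∑ i, a i t ^ 2 :=
        sum_congr rfl fun t _ => by simpa using two_mul_sum_powerset_sub_sq univ (a · t)
    _ = 4 ^ Fintype.card ι * ∑ i, ∑ t, a i t ^ 2 := by rw [← mul_sum, sum_comm]

lemma exists_ne_card_mul_le_sum_sum {α : Type*} [Fintype α] [DecidableEq α] [Nontrivial α]
    (F : α → α → ℝ) (hF : ∀ x, F x x = 0) :
    ∃ x y, x ≠ y ∧ (Fintype.card α * (Fintype.card α - 1) : ℝ) * F x y ≤ ∑ x, ∑ y, F x y := by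
  set D := (univ : Finset α).offDiag
  have sum_offDiag : ∑ p ∈ D, F p.1 p.2 = ∑ x, ∑ y, F x y := by
    rw [← sum_product', ← diag_union_offDiag, sum_union (disjoint_diag_offDiag _), sum_diag]
    simp [D, hF]
  have card_D : (#D : ℝ) = Fintype.card α * (Fintype.card α - 1) := by
    rw [offDiag_card, Nat.cast_sub (Nat.le_mul_self _), card_univ]
    push_cast
    ring
  have hD : D.Nonempty := by
    obtain ⟨x, y, hxy⟩ := exists_pair_ne α
    exact ⟨(x, y), by simpa [D] using hxy⟩
  obtain ⟨⟨x, y⟩, hxy, hle⟩ := exists_le_of_sum_le hD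
    (f := fun p => #D * F p.1 p.2) (g := fun _ => ∑ p ∈ D, F p.1 p.2)
    (by rw [← mul_sum, sum_const, nsmul_eq_mul])
  exact ⟨x, y, (mem_offDiag.mp hxy).2.2, by rwa [← card_D, ← sum_offDiag]⟩

theorem exists_close_pair_general
    (m : ℕ) (hm : 2 ≤ m) (n : ℕ)
    (x : Fin m → Fin n → ℝ) (w : Fin m → ℝ)
    (P : ℝ)
    (hpow : ∑ i : Fin m, ∑ t, (w i * x i t) ^ 2 ≤ m * n * P) :
    ∃ S S' : Finset (Fin m), S ≠ S' ∧
      ∑ t, ((∑ i ∈ S, w i * x i t) - ∑ i ∈ S', w i * x i t) ^ 2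
        ≤ 2 ^ m * m * n * P / (2 ^ m - 1) := by
  have : NeZero m := ⟨by omega⟩
  obtain ⟨S, S', hne, hle⟩ := exists_ne_card_mul_le_sum_sum
    (fun S S' => ∑ t, ((∑ i ∈ S, w i * x i t) - ∑ i ∈ S', w i * x i t) ^ 2) (by simp)
  rw [Fintype.card_finset, Fintype.card_fin, Nat.cast_pow, Nat.cast_ofNat] at hle
  have total := two_mul_sum_sum_sum_sub_sq fun i t => w i * x i t
  rw [Fintype.card_fin] at total
  have power_nonneg : 0 ≤ ∑ i : Fin m, ∑ t, (w i * x i t) ^ 2 := by positivity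
  have one_lt_two_pow : (1 : ℝ) < 2 ^ m := one_lt_pow₀ one_lt_two (by omega)
  have four_pow : (4 : ℝ) ^ m = 2 ^ m * 2 ^ m := by rw [← mul_pow]; norm_num
  refine ⟨S, S', hne, (le_div_iff₀ (by linarith)).mpr ?_⟩
  -- Averaging even gives half of the claimed bound.
  nlinarith

/-- **Minimum-distance consequence.**  Under the total power constraint
`∑_i ∑_t (w_i x_{i,t})² ≤ m n P`, some pair of distinct subsets `S ≠ S'` of `{1,…,m}`
has squared signal distance `‖v_S - v_{S'}‖₂² ≤ 2^m m n P / (2^m - 1)`. -/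
theorem exists_close_pair
    (m : ℕ) (hm : 2 ≤ m) (n : ℕ) (hn : 1 ≤ n)
    (x : Fin m → Fin n → ℝ) (w : Fin m → ℝ)
    (P : ℝ) (hP : 0 < P)
    (hpow : ∑ i : Fin m, ∑ t, (w i * x i t) ^ 2 ≤ m * n * P) :
    ∃ S S' : Finset (Fin m), S ≠ S' ∧
      ∑ t, ((∑ i ∈ S, w i * x i t) - ∑ i ∈ S', w i * x i t) ^ 2
        ≤ 2 ^ m * m * n * P / (2 ^ m - 1) :=
  exists_close_pair_general m hm n x w P hpow
end
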